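/- In a linear array of n cells each holding a symbol from {a,b}, where at each synchronous step every adjacent pair (b,a) (b immediately left of a) swaps its contents, the array reaches the sorted configuration a^{k}b^{n-k} (k = number of a's) after at most n steps. -/
import Mathlib


/-! STATEMENT 2: parallel odd–even style transposition dynamics on a word over `{a,b}`.
We model `a` by `false` and `b` by `true`.  At every synchronous step each factor `ba`
is replaced by `ab`: a cell holding `b` whose right neighbour holds `a` sends its `b`
right and receives the `a`; a cell holding `a` whose left neighbour holds `b` sends
its `a` left and receives the `b`. -/

/-- One parallel step of the local transposition rule on an array of `n` cells. -/
def sortStep {n : ℕ} (c : Fin n → Bool) : Fin n → Bool := fun i =>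
  if c i = true ∧ (∃ h : i.val + 1 < n, c ⟨i.val + 1, h⟩ = false) then
    false
  else if c i = false ∧ (0 < i.val ∧
      c ⟨i.val - 1, Nat.lt_of_le_of_lt (Nat.sub_le _ _) i.isLt⟩ = true) then
    true
  else c i

/-- Extend a configuration to all of `ℕ` by `false`. -/
def extC {n : ℕ} (c : Fin n → Bool) (j : ℕ) : Bool := if h : j < n then c ⟨j, h⟩ else false

/-- Number of `true`s strictly below position `p`. -/
def cnt {n : ℕ} (c : Fin n → Bool) (p : ℕ) : ℤ :=
  ∑ j ∈ Finset.range p, (if extC c j then 1 else 0)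

/-- Flux across the boundary `p-1 | p`: 1 if a `b` crosses it this step. -/
def flux {n : ℕ} (c : Fin n → Bool) (p : ℕ) : ℤ :=
  if 0 < p ∧ p < n ∧ extC c (p - 1) = true ∧ extC c p = false then 1 else 0

lemma exists_ext {n : ℕ} (c : Fin n → Bool) (q : ℕ) :
    (∃ h : q < n, c ⟨q, h⟩ = false) ↔ (q < n ∧ extC c q = false) := by
  constructor
  · rintro ⟨h, hc⟩
    exact ⟨h, by simp [extC, h, hc]⟩
  · rintro ⟨h, hc⟩
    exact ⟨h, by simpa [extC, h] using hc⟩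

lemma flux_eq_zero {n : ℕ} (c : Fin n → Bool) (p : ℕ)
    (h : ¬ (0 < p ∧ p < n ∧ extC c (p - 1) = true ∧ extC c p = false)) : flux c p = 0 := by
  simp only [flux]
  exact if_neg h

lemma point {n : ℕ} (c : Fin n → Bool) (p : ℕ) :
    (if extC (sortStep c) p then (1 : ℤ) else 0)
      = (if extC c p then 1 else 0) + flux c p - flux c (p + 1) := by
  by_cases hp : p < n
  · have e1 : extC (sortStep c) p = sortStep c ⟨p, hp⟩ := dif_pos hp
    have e2 : extC c p = c ⟨p, hp⟩ := dif_pos hp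
    have hpm : p - 1 < n := Nat.lt_of_le_of_lt (Nat.sub_le _ _) hp
    have e3 : extC c (p - 1) = c ⟨p - 1, hpm⟩ := dif_pos hpm
    rw [e1, e2]
    unfold sortStep
    simp only [exists_ext]
    cases hb : c ⟨p, hp⟩ with
    | true =>
      have hf1 : flux c p = 0 := by
        apply flux_eq_zero
        rintro ⟨-, -, -, h4⟩
        rw [e2, hb] at h4
        exact Bool.true_eq_false.mp h4
      by_cases h2 : p + 1 < n ∧ extC c (p + 1) = false
      · have hf2 : flux c (p + 1) = 1 := by
          simp only [flux, Nat.add_sub_cancel]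
          rw [if_pos ⟨Nat.succ_pos p, h2.1, by rw [e2, hb], h2.2⟩]
        simp [hb, h2, hf1, hf2]
      · have hf2 : flux c (p + 1) = 0 := by
          apply flux_eq_zero
          simp only [Nat.add_sub_cancel]
          rintro ⟨-, hh2, -, hh4⟩
          exact h2 ⟨hh2, hh4⟩
        simp only [hb, true_and, h2, if_false, Bool.true_eq_false, false_and, if_false]
        rw [hf1, hf2]
        ring
    | false =>
      have hf2 : flux c (p + 1) = 0 := by
        apply flux_eq_zero
        simp only [Nat.add_sub_cancel]
        rintro ⟨-, -, hh3, -⟩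
        rw [e2, hb] at hh3
        exact Bool.false_eq_true.mp hh3
      by_cases h2 : 0 < p ∧ c ⟨p - 1, hpm⟩ = true
      · have hf1 : flux c p = 1 := by
          simp only [flux]
          rw [if_pos ⟨h2.1, hp, by rw [e3]; exact h2.2, by rw [e2, hb]⟩]
        simp [hb, h2, hf1, hf2]
      · have hf1 : flux c p = 0 := by
          apply flux_eq_zero
          rintro ⟨hh1, -, hh3, -⟩
          rw [e3] at hh3
          exact h2 ⟨hh1, hh3⟩
        simp only [hb, Bool.false_eq_true, false_and, if_false, true_and]
        rw [if_neg h2, hf1, hf2]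
        norm_num
  · have e1 : extC (sortStep c) p = false := dif_neg hp
    have e2 : extC c p = false := dif_neg hp
    have hf1 : flux c p = 0 := flux_eq_zero c p (fun h => hp h.2.1)
    have hf2 : flux c (p + 1) = 0 :=
      flux_eq_zero c (p + 1) (fun h => hp (Nat.lt_of_succ_lt h.2.1))
    simp [e1, e2, hf1, hf2]

lemma cnt_succ {n : ℕ} (c : Fin n → Bool) (p : ℕ) :
    cnt c (p + 1) = cnt c p + (if extC c p then 1 else 0) := by
  simp only [cnt, Finset.sum_range_succ]

lemma cnt_step {n : ℕ} (c : Fin n → Bool) (p : ℕ) :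
    cnt (sortStep c) p = cnt c p - flux c p := by
  induction p with
  | zero => simp [cnt, flux]
  | succ p ih =>
    rw [cnt_succ, cnt_succ, ih, point]
    ring

lemma flux_top {n : ℕ} (c : Fin n → Bool) (p : ℕ) (hp : n ≤ p) : flux c p = 0 :=
  flux_eq_zero c p (by intro h; omega)

lemma cnt_nonneg {n : ℕ} (c : Fin n → Bool) (p : ℕ) : 0 ≤ cnt c p := by
  apply Finset.sum_nonneg
  intro j _
  split <;> norm_num

lemma cnt_mono {n : ℕ} (c : Fin n → Bool) {p q : ℕ} (h : p ≤ q) : cnt c p ≤ cnt c q := by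
  apply Finset.sum_le_sum_of_subset_of_nonneg (Finset.range_subset_range.2 h)
  intro j _ _
  split <;> norm_num

lemma cnt_le {n : ℕ} (c : Fin n → Bool) {p q : ℕ} (h : p ≤ q) :
    cnt c q ≤ cnt c p + ((q : ℤ) - p) := by
  obtain ⟨d, rfl⟩ := Nat.exists_eq_add_of_le h
  have key : ∀ e : ℕ, cnt c (p + e) ≤ cnt c p + e := by
    intro e
    induction e with
    | zero => simp
    | succ e ih =>
      rw [show p + (e + 1) = (p + e) + 1 by ring, cnt_succ]
      split <;> push_cast <;> omega
  calc cnt c (p + d) ≤ cnt c p + d := key d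
    _ = cnt c p + ((↑(p + d) : ℤ) - p) := by push_cast; ring

lemma cnt_le_self {n : ℕ} (c : Fin n → Bool) (p : ℕ) : cnt c p ≤ (p : ℕ) := by
  have h := cnt_le c (Nat.zero_le p)
  simp only [cnt, Finset.range_zero, Finset.sum_empty, Nat.cast_zero, sub_zero, zero_add] at h
  exact h

/-- The max-plus style one-step bound, for `1 ≤ p < n`. -/
lemma step_bound {n : ℕ} (c : Fin n → Bool) (p : ℕ) (h1 : 1 ≤ p) (h2 : p < n) :
    cnt (sortStep c) p ≤ max (cnt c (p - 1)) (cnt c (p + 1) - 1) := by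
  have hs : cnt c p = cnt c (p - 1) + (if extC c (p - 1) then 1 else 0) := by
    have := cnt_succ c (p - 1)
    rw [show p - 1 + 1 = p by omega] at this
    exact this
  have hs2 : cnt c (p + 1) = cnt c p + (if extC c p then 1 else 0) := cnt_succ c p
  rw [cnt_step]
  cases hx : extC c (p - 1) with
  | false =>
    have hf : flux c p = 0 := by
      simp [flux, hx]
    rw [hf]
    simp only [hx, Bool.false_eq_true, if_false, add_zero] at hs
    simp [hs]
  | true =>
    cases hy : extC c p with
    | false =>
      have hf : flux c p = 1 := by
        have hp0 : 0 < p := h1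
        simp only [flux]
        rw [if_pos ⟨hp0, h2, hx, hy⟩]
      rw [hf]
      simp only [hy, Bool.false_eq_true, if_false, add_zero] at hs2
      have := le_max_right (cnt c (p - 1)) (cnt c (p + 1) - 1)
      omega
    | true =>
      have hf : flux c p = 0 := by
        simp [flux, hy]
      rw [hf]
      simp only [hy, if_true] at hs2
      have := le_max_right (cnt c (p - 1)) (cnt c (p + 1) - 1)
      omega

lemma cnt_iter_top {n : ℕ} (c : Fin n → Bool) (t : ℕ) :
    cnt (sortStep^[t] c) n = cnt c n := by
  induction t with
  | zero => simp
  | succ t ih =>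
    rw [Function.iterate_succ_apply', cnt_step, flux_top _ _ le_rfl, ih]
    ring

/-- The key invariant. -/
lemma invariant {n : ℕ} (c : Fin n → Bool) (t p : ℕ) (hp : p ≤ n) :
    cnt (sortStep^[t] c) p ≤ max 0 ((p : ℤ) + cnt c n - n) ∨
      2 * cnt (sortStep^[t] c) p ≤ (p : ℤ) + cnt c n - t := by
  induction t generalizing p with
  | zero =>
    right
    have h1 := cnt_le_self c p
    have h2 := cnt_mono c hp
    simp only [Function.iterate_zero_apply]
    push_cast
    omega
  | succ t ih =>
    rw [Function.iterate_succ_apply']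
    set d := sortStep^[t] c with hd
    rcases Nat.eq_zero_or_pos p with rfl | hp1
    · left
      have : cnt (sortStep d) 0 = 0 := by simp [cnt]
      rw [this]
      exact le_max_left _ _
    rcases eq_or_lt_of_le hp with heq | hp2
    · left
      have hval : cnt (sortStep d) p = cnt c n := by
        rw [cnt_step, heq, flux_top d n le_rfl, hd, cnt_iter_top]
        ring
      rw [hval, heq]
      have h0 := cnt_nonneg c n
      rcases max_cases (0 : ℤ) ((n : ℤ) + cnt c n - n) with ⟨hm, _⟩ | ⟨hm, _⟩ <;> omega
    -- 1 ≤ p < n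
    have hb := step_bound d p hp1 hp2
    have ihm := ih (p - 1) (by omega)
    have ihp := ih (p + 1) (by omega)
    have hdn : cnt d n = cnt c n := cnt_iter_top c t
    have hcast : ((p - 1 : ℕ) : ℤ) = (p : ℤ) - 1 := by
      have : (1 : ℕ) ≤ p := hp1
      push_cast [this]
      ring
    rw [hcast] at ihm
    push_cast at ihp
    rcases max_cases (cnt d (p - 1)) (cnt d (p + 1) - 1) with ⟨hm, _⟩ | ⟨hm, _⟩ <;>
      rw [hm] at hb
    · rcases ihm with h | h
      · left
        rcases le_max_iff.1 h with h' | h'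
        · exact le_max_of_le_left (le_trans hb h')
        · exact le_max_of_le_right (by omega)
      · right
        push_cast
        omega
    · rcases ihp with h | h
      · left
        rcases le_max_iff.1 h with h' | h'
        · exact le_max_of_le_left (by omega)
        · exact le_max_of_le_right (by omega)
      · right
        push_cast
        omega

lemma cnt_final {n : ℕ} (c : Fin n → Bool) (p : ℕ) (hp : p ≤ n) :
    cnt (sortStep^[n] c) p = max 0 ((p : ℤ) + cnt c n - n) := by
  have h0 : (0 : ℤ) ≤ cnt (sortStep^[n] c) p := cnt_nonneg _ p
  have hdn : cnt (sortStep^[n] c) n = cnt c n := cnt_iter_top c n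
  have hlow2 : (p : ℤ) + cnt c n - n ≤ cnt (sortStep^[n] c) p := by
    have h := cnt_le (sortStep^[n] c) hp
    rw [hdn] at h
    omega
  rcases invariant c n p hp with h | h <;>
    rcases max_cases (0 : ℤ) ((p : ℤ) + cnt c n - (n : ℤ)) with ⟨hm, hm'⟩ | ⟨hm, hm'⟩ <;>
      rw [hm] at * <;> omega

/-- iterating the parallel transposition rule on any initial word of
length `n` yields, within `n` steps, the sorted word `a^k b^{n-k}` where
`k` is the number of `a`'s. -/
theorem parallel_transpositions_sort {n : ℕ} (c : Fin n → Bool) :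
    ∃ m ≤ n, sortStep^[m] c =
      fun i : Fin n => decide ((Finset.univ.filter fun j : Fin n => c j = false).card ≤ i.val) := by
  refine ⟨n, le_rfl, funext fun i => ?_⟩
  set k := (Finset.univ.filter fun j : Fin n => c j = false).card with hk
  set d := sortStep^[n] c with hd
  -- cnt c n = n - k
  have hsum : cnt c n = (n : ℤ) - k := by
    have h1 : cnt c n = ((Finset.univ.filter fun j : Fin n => c j = true).card : ℤ) := by
      rw [cnt, ← Fin.sum_univ_eq_sum_range (fun j => if extC c j then (1 : ℤ) else 0) n,
        ← Finset.sum_boole]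
      apply Finset.sum_congr rfl
      intro j _
      simp [extC, j.isLt]
    have htot : (Finset.univ.filter fun j : Fin n => c j = false).card
        + (Finset.univ.filter fun j : Fin n => c j = true).card = n := by
      have h2 := Finset.card_filter_add_card_filter_not
        (s := (Finset.univ : Finset (Fin n))) (p := fun j => c j = false)
      simp only [Bool.not_eq_false, Finset.card_univ, Fintype.card_fin] at h2
      exact h2
    rw [h1]
    have h3 : (k : ℤ) + ((Finset.univ.filter fun j : Fin n => c j = true).card : ℤ) = n := by
      rw [hk]
      exact_mod_cast htot
    omega
  have hvi : cnt d i.val = max 0 ((i.val : ℤ) + cnt c n - n) :=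
    cnt_final c i.val (le_of_lt i.isLt)
  have hvi1 : cnt d (i.val + 1) = max 0 ((i.val : ℤ) + 1 + cnt c n - n) := by
    have h := cnt_final c (i.val + 1) i.isLt
    rw [← hd] at h
    push_cast at h
    exact h
  have hstep : cnt d (i.val + 1) = cnt d i.val + (if extC d i.val then 1 else 0) :=
    cnt_succ d i.val
  have hext : extC d i.val = d i := by
    simp only [extC, i.isLt, dif_pos]
  have hkn : (k : ℤ) ≤ n := by
    have := Finset.card_filter_le Finset.univ (fun j : Fin n => c j = false)
    simp only [Finset.card_univ, Fintype.card_fin] at this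
    exact_mod_cast this
  by_cases hik : k ≤ i.val
  · have hik' : (k : ℤ) ≤ (i.val : ℤ) := by exact_mod_cast hik
    have h1 : cnt d i.val = (i.val : ℤ) - k := by
      rw [hvi, hsum, max_eq_right (by omega)]
      ring
    have h2 : cnt d (i.val + 1) = (i.val : ℤ) + 1 - k := by
      rw [hvi1, hsum, max_eq_right (by omega)]
      ring
    have hval : (if extC d i.val then (1 : ℤ) else 0) = 1 := by
      rw [h1, h2] at hstep
      omega
    have hT : extC d i.val = true := by
      cases hE : extC d i.val with
      | true => rfl
      | false => rw [hE] at hval; norm_num at hval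
    rw [← hext, hT]
    simp [hik]
  · have hik' : (i.val : ℤ) < k := by exact_mod_cast Nat.lt_of_not_le hik
    have h1 : cnt d i.val = 0 := by
      rw [hvi, hsum, max_eq_left (by omega)]
    have h2 : cnt d (i.val + 1) = 0 := by
      rw [hvi1, hsum, max_eq_left (by omega)]
    have hval : (if extC d i.val then (1 : ℤ) else 0) = 0 := by
      rw [h1, h2] at hstep
      omega
    have hF : extC d i.val = false := by
      cases hE : extC d i.val with
      | false => rfl
      | true => rw [hE] at hval; norm_num at hval
    rw [← hext, hF]
    simp [hik]
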